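/- arXiv:1011.3804 — 7 statements merged into one kernel-verified Lean document; each statement's English description precedes it below -/
import Mathlib

section
/- For integers v ≥ k ≥ t ≥ 1, the covering number satisfies the Schönheim bound: C(v,k,t) ≥ ⌈(v/k)·⌈((v-1)/(k-1))·⌈⋯⌈(v-t+1)/(k-t+1)⌉⋯⌉⌉⌉, where the nested ceilings are applied from the innermost factor outward. -/
/-!
Count incidences between points and blocks. The blocks through a point `x`, with `x` deleted,
form a `(v-1, k-1, t-1)`-covering (the derived design at `x`), so by induction every point lies
in at least `s = sch (v-1) (k-1) (t-1)` blocks. Hence `v * s ≤ k * N` for a covering with `N`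
blocks, and as `N` is an integer, `N ≥ ⌈v * s / k⌉`.
-/

/-- A `(v,k,t)`-covering design with `N` blocks: a family of `k`-subsets of `Fin v`
such that every `t`-subset is contained in some block. -/
def IsCover (v k t : ℕ) {N : ℕ} (D : Fin N → Finset (Fin v)) : Prop :=
  (∀ r, (D r).card = k) ∧ ∀ T : Finset (Fin v), T.card = t → ∃ r, T ⊆ D r

/-- The covering number `C(v,k,t)`: minimum number of blocks of a `(v,k,t)`-covering design. -/
noncomputable def coverNum (v k t : ℕ) : ℕ :=
  sInf {N | ∃ D : Fin N → Finset (Fin v), IsCover v k t D}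

/-- The nested-ceiling Schönheim expression:
`sch v k t = ⌈(v/k)⌈((v-1)/(k-1))⋯⌈(v-t+1)/(k-t+1)⌉⋯⌉⌉`, built from the innermost
factor outward.  (For an integer `s`, `⌈(v/k)·s⌉ = ⌈v·s/k⌉ = (v·s + k - 1)/k` in `ℕ`.) -/
def sch : ℕ → ℕ → ℕ → ℕ
  | _, _, 0 => 1
  | v, k, t + 1 => (v * sch (v - 1) (k - 1) t + (k - 1)) / k

open Finset

/-- `IsCover` over arbitrary point and index types, so that the derived design on `{y // y ≠ x}`
needs no relabelling. -/
def IsCoveringDesign {α ι : Type*} (k t : ℕ) (D : ι → Finset α) : Prop :=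
  (∀ i, #(D i) = k) ∧ ∀ T : Finset α, #T = t → ∃ i, T ⊆ D i

namespace IsCoveringDesign

variable {α ι : Type*} {k t : ℕ} {D : ι → Finset α}

theorem derived [DecidableEq α] (hD : IsCoveringDesign k (t + 1) D) (x : α) :
    IsCoveringDesign (k - 1) t fun i : {i // x ∈ D i} => (D i).subtype (· ≠ x) := by
  refine ⟨fun ⟨i, hxi⟩ => ?_, fun T hT => ?_⟩
  · rw [card_subtype, filter_ne', card_erase_of_mem hxi, hD.1 i]
  · obtain ⟨i, hi⟩ := hD.2 (insert x (T.map (Function.Embedding.subtype _))) <| by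
      rw [card_insert_of_notMem (by simp), card_map, hT]
    refine ⟨⟨i, hi (mem_insert_self _ _)⟩, fun y hy => ?_⟩
    rw [mem_subtype]
    exact hi (mem_insert_of_mem (mem_map_of_mem _ hy))

theorem card_pos [Fintype ι] (hD : IsCoveringDesign k 0 D) : 0 < Fintype.card ι :=
  Fintype.card_pos_iff.2 ⟨(hD.2 ∅ rfl).choose⟩

theorem card_mul_le_card_mul [Fintype α] [DecidableEq α] [Fintype ι] {m : ℕ}
    (hD : IsCoveringDesign k t D) (hm : ∀ x, m ≤ Fintype.card {i // x ∈ D i}) :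
    Fintype.card α * m ≤ Fintype.card ι * k := by
  simpa using card_nsmul_le_card_nsmul (R := ℕ) (s := univ) (t := univ) (fun x i => x ∈ D i)
    (fun x _ => by simpa [bipartiteAbove, Fintype.card_subtype] using hm x)
    (fun i _ => by simp [bipartiteBelow, hD.1 i])

theorem sch_le_card [Fintype α] [Fintype ι] (hD : IsCoveringDesign k t D) :
    sch (Fintype.card α) k t ≤ Fintype.card ι := by
  classical
  induction t generalizing α ι k with
  | zero => exact hD.card_pos
  | succ t ih =>
    rcases Nat.eq_zero_or_pos k with rfl | hk
    · simp [sch]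
    have hthrough (x : α) :
        sch (Fintype.card α - 1) (k - 1) t ≤ Fintype.card {i // x ∈ D i} := by
      simpa [Fintype.card_subtype_compl] using ih (hD.derived x)
    rw [sch, Nat.div_le_iff_le_mul_add_pred hk, mul_comm k]
    exact Nat.add_le_add_right (hD.card_mul_le_card_mul hthrough) _

end IsCoveringDesign

theorem IsCover.isCoveringDesign {v k t N : ℕ} {D : Fin N → Finset (Fin v)}
    (hD : IsCover v k t D) : IsCoveringDesign k t D := hD

theorem exists_isCover {v k t : ℕ} (htk : t ≤ k) (hkv : k ≤ v) :
    ∃ N, ∃ D : Fin N → Finset (Fin v), IsCover v k t D := by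
  let B := powersetCard k (univ : Finset (Fin v))
  refine ⟨#B, fun i => B.equivFin.symm i, fun i => (mem_powersetCard.1 (B.equivFin.symm i).2).2,
    fun T hT => ?_⟩
  obtain ⟨S, hTS, -, hS⟩ := exists_subsuperset_card_eq (subset_univ T) (hT ▸ htk)
    (by simpa using hkv)
  exact ⟨B.equivFin ⟨S, mem_powersetCard.2 ⟨subset_univ S, hS⟩⟩, by simpa using hTS⟩

theorem schonheim_bound_general (v k t : ℕ) (htk : t ≤ k) (hkv : k ≤ v) :
    sch v k t ≤ coverNum v k t := by
  refine le_csInf (exists_isCover htk hkv) ?_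
  rintro N ⟨D, hD⟩
  simpa using hD.isCoveringDesign.sch_le_card

/-- The Schönheim bound: for `v ≥ k ≥ t ≥ 1`,
`C(v,k,t) ≥ ⌈(v/k)⌈((v-1)/(k-1))⋯⌈(v-t+1)/(k-t+1)⌉⋯⌉⌉`. -/
theorem schonheim_bound (v k t : ℕ) (ht : 1 ≤ t) (htk : t ≤ k) (hkv : k ≤ v) :
    sch v k t ≤ coverNum v k t :=
  schonheim_bound_general v k t htk hkv
end

section
/- For vectors v,k of positive integers with k ≤ v componentwise and Σk_i ≥ 2, C(v,k,2) ≥ ⌈(C(v,2) − Σ_{i: k_i=1} C(v_i,2)) / C(k,2)⌉, where v = Σv_i, k = Σk_i, and C(n,2) denotes the binomial coefficient n choose 2 (with C(1,2)=0). -/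
open Finset

/-- A generalized covering design of strength `t`: the blocks are indexed by `R`;
block `D r` has `i`-th component a `k i`-subset of the `v i`-set `Fin (v i)`, and every
admissible tuple of sets `T` (componentwise sizes at most `k`, total size `t`) is contained
componentwise in some block. -/
def IsGCD {ι : Type*} [Fintype ι] (v k : ι → ℕ) (t : ℕ) {R : Type*}
    (D : R → ∀ i, Finset (Fin (v i))) : Prop :=
  (∀ r i, (D r i).card = k i) ∧
  ∀ T : ∀ i, Finset (Fin (v i)),
    (∀ i, (T i).card ≤ k i) → (∑ i, (T i).card) = t →
    ∃ r, ∀ i, T i ⊆ D r i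

/-- The generalized covering number: the least `N` such that a generalized covering design
with `N` blocks exists. -/
noncomputable def GCNum {ι : Type*} [Fintype ι] (v k : ι → ℕ) (t : ℕ) : ℕ :=
  sInf {N | ∃ D : Fin N → ∀ i, Finset (Fin (v i)), IsGCD v k t D}

/-!
Regard a design as the family of blocks `Σ i, D r i`, each of size `K = Σ k i`, in the disjoint
union `Σ i, Fin (v i)` of the parts. As `k i ≥ 1` for all `i`, a pair of points splits into an
admissible tuple unless both points lie in one part with `k i = 1`; every other pair therefore
lies in some block. A block contains `C(K,2)` pairs, so there are at least
`(C(Σ v i, 2) - Σ_{k i = 1} C(v i, 2)) / C(K,2)` blocks.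
-/

lemma Nat.add_pred_div_le_of_le_mul {a b c : ℕ} (h : a ≤ c * b) : (a + (b - 1)) / b ≤ c := by
  rcases b.eq_zero_or_pos with rfl | hb
  · simp
  · rw [Nat.div_le_iff_le_mul_add_pred hb, mul_comm]
    exact Nat.add_le_add_right h _

lemma Finset.card_preimage_sigmaMk {α : Type*} [DecidableEq α] {β : α → Type*}
    (p : Finset (Σ a, β a)) (a : α) :
    #(p.preimage (Sigma.mk a) sigma_mk_injective.injOn) = #{q ∈ p | q.1 = a} := by
  rw [← sum_singleton (fun a => #(p.preimage (Sigma.mk a) sigma_mk_injective.injOn)) a,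
    ← card_sigma, sigma_preimage_mk]
  simp only [mem_singleton]

namespace IsGCD

variable {ι : Type*} [Fintype ι] {v k : ι → ℕ} {t : ℕ} {R : Type*}
  {D : R → ∀ i, Finset (Fin (v i))}

lemma comp_surjective {R' : Type*} (hD : IsGCD v k t D) {f : R' → R}
    (hf : f.Surjective) : IsGCD v k t (D ∘ f) := by
  refine ⟨fun r => hD.1 (f r), fun T hT hsum => ?_⟩
  obtain ⟨r, hr⟩ := hD.2 T hT hsum
  obtain ⟨r', rfl⟩ := hf r
  exact ⟨r', hr⟩

lemma subtype_val (hkv : ∀ i, k i ≤ v i) :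
    IsGCD v k t (Subtype.val : {B : ∀ i, Finset (Fin (v i)) // ∀ i, #(B i) = k i} → _) := by
  refine ⟨fun B => B.2, fun T hT _ => ?_⟩
  choose B hTB _ hB using fun i =>
    exists_subsuperset_card_eq (T i).subset_univ (hT i) (by simpa using hkv i)
  exact ⟨⟨B, hB⟩, hTB⟩

end IsGCD

lemma exists_isGCD_gcNum {ι : Type*} [Fintype ι] {v k : ι → ℕ} (t : ℕ)
    (hkv : ∀ i, k i ≤ v i) :
    ∃ D : Fin (GCNum v k t) → ∀ i, Finset (Fin (v i)), IsGCD v k t D := by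
  classical
  have hne : {N | ∃ D : Fin N → ∀ i, Finset (Fin (v i)), IsGCD v k t D}.Nonempty :=
    ⟨_, _, (IsGCD.subtype_val hkv).comp_surjective (Fintype.equivFin _).symm.surjective⟩
  exact Nat.sInf_mem hne

section Pairs

variable {ι : Type*} {v k : ι → ℕ}

def part (v : ι → ℕ) (i : ι) : Finset (Σ i, Fin (v i)) :=
  ({i} : Finset ι).sigma fun _ => univ

lemma mem_part {i : ι} {q : Σ i, Fin (v i)} : q ∈ part v i ↔ q.1 = i := by
  simp [part]

lemma card_part (i : ι) : #(part v i) = v i := by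
  simp [part]

variable [Fintype ι] [DecidableEq ι]

def exemptPairs (v k : ι → ℕ) : Finset (Finset (Σ i, Fin (v i))) :=
  ({i | k i = 1} : Finset ι).biUnion fun i => (part v i).powersetCard 2

lemma card_exemptPairs : #(exemptPairs v k) = ∑ i with k i = 1, (v i).choose 2 := by
  rw [exemptPairs, card_biUnion]
  · simp only [card_powersetCard, card_part]
  · intro i _ j _ hij
    refine disjoint_left.2 fun p hpi hpj => ?_
    rw [mem_powersetCard] at hpi hpj
    obtain ⟨q, hq⟩ := card_pos.1 (by omega : 0 < #p)
    exact hij ((mem_part.1 (hpi.1 hq)).symm.trans (mem_part.1 (hpj.1 hq)))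

lemma card_powersetCard_two_sdiff_exemptPairs :
    #((univ : Finset (Σ i, Fin (v i))).powersetCard 2 \ exemptPairs v k) =
      (∑ i, v i).choose 2 - ∑ i with k i = 1, (v i).choose 2 := by
  have hsub : exemptPairs v k ⊆ univ.powersetCard 2 := fun p hp => by
    obtain ⟨i, -, hpi⟩ := mem_biUnion.1 hp
    exact mem_powersetCard.2 ⟨subset_univ _, (mem_powersetCard.1 hpi).2⟩
  rw [card_sdiff_of_subset hsub, card_exemptPairs, card_powersetCard, card_univ,
    Fintype.card_sigma]
  simp

variable {R : Type*} {D : R → ∀ i, Finset (Fin (v i))}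

/-- The tuple `T i = p ∩ part i` is admissible: a part holding both points of `p` has `k i ≥ 2`
unless `p` is exempt. -/
lemma IsGCD.exists_subset_block_of_card_eq_two (hD : IsGCD v k 2 D) (hk : ∀ i, 1 ≤ k i)
    {p : Finset (Σ i, Fin (v i))} (hp : #p = 2) (hpe : p ∉ exemptPairs v k) :
    ∃ r, p ⊆ univ.sigma (D r) := by
  let T : ∀ i, Finset (Fin (v i)) := fun i =>
    p.preimage (Sigma.mk (β := fun i => Fin (v i)) i) sigma_mk_injective.injOn
  have hpT : univ.sigma T = p := sigma_preimage_mk_of_subset p (subset_univ _)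
  have hsum : ∑ i, #(T i) = 2 := by rw [← card_sigma, hpT, hp]
  have hT : ∀ i, #(T i) ≤ k i := by
    intro i
    by_contra! hlt
    have hTi_le : #(T i) ≤ 2 := hsum ▸ single_le_sum (fun j _ => Nat.zero_le #(T j)) (mem_univ i)
    have hTi : #(T i) = #{q ∈ p | q.1 = i} := p.card_preimage_sigmaMk i
    have hki : k i = 1 := by have := hk i; omega
    have hfilter : #{q ∈ p | q.1 = i} = #p := by omega
    have hpi : p ⊆ part v i := fun q hq => mem_part.2 (card_filter_eq_iff.1 hfilter q hq)
    exact hpe (mem_biUnion.2 ⟨i, mem_filter.2 ⟨mem_univ i, hki⟩, mem_powersetCard.2 ⟨hpi, hp⟩⟩)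
  obtain ⟨r, hr⟩ := hD.2 T hT hsum
  exact ⟨r, hpT ▸ sigma_mono subset_rfl hr⟩

lemma IsGCD.card_sdiff_exemptPairs_le [Fintype R] (hD : IsGCD v k 2 D) (hk : ∀ i, 1 ≤ k i) :
    #((univ : Finset (Σ i, Fin (v i))).powersetCard 2 \ exemptPairs v k) ≤
      Fintype.card R * (∑ i, k i).choose 2 := by
  calc _ ≤ #(univ.biUnion fun r => (univ.sigma (D r)).powersetCard 2) := by
        refine card_le_card fun p hp => ?_
        obtain ⟨hp2, hpe⟩ := mem_sdiff.1 hp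
        obtain ⟨-, hp⟩ := mem_powersetCard.1 hp2
        obtain ⟨r, hr⟩ := hD.exists_subset_block_of_card_eq_two hk hp hpe
        exact mem_biUnion.2 ⟨r, mem_univ r, mem_powersetCard.2 ⟨hr, hp⟩⟩
    _ ≤ ∑ r, #((univ.sigma (D r)).powersetCard 2) := card_biUnion_le
    _ = Fintype.card R * (∑ i, k i).choose 2 := by
        simp [card_powersetCard, card_sigma, hD.1]

end Pairs

/-- The ceiling `⌈E/K⌉` is written as `(E + (K-1))/K` in `ℕ`. -/
theorem gc_edge_counting_bound_general {m : ℕ} (v k : Fin m → ℕ)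
    (hk : ∀ i, 1 ≤ k i) (hkv : ∀ i, k i ≤ v i) :
    ((∑ i, v i).choose 2 - ∑ i ∈ Finset.univ.filter (fun i => k i = 1), (v i).choose 2
        + ((∑ i, k i).choose 2 - 1)) / (∑ i, k i).choose 2
      ≤ GCNum v k 2 := by
  obtain ⟨D, hD⟩ := exists_isGCD_gcNum 2 hkv
  apply Nat.add_pred_div_le_of_le_mul
  simpa [card_powersetCard_two_sdiff_exemptPairs] using hD.card_sdiff_exemptPairs_le hk

/-- Edge-counting bound:
`C(v,k,2) ≥ ⌈( C(Σv_i,2) - Σ_{i : k_i = 1} C(v_i,2) ) / C(Σk_i,2) ⌉`,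
where `C(n,2) = n.choose 2` and the ceiling `⌈E/K⌉` is written as `(E + (K-1))/K` in `ℕ`. -/
theorem gc_edge_counting_bound {m : ℕ} (v k : Fin m → ℕ)
    (hk : ∀ i, 1 ≤ k i) (hkv : ∀ i, k i ≤ v i) (h2 : 2 ≤ ∑ i, k i) :
    ((∑ i, v i).choose 2 - ∑ i ∈ Finset.univ.filter (fun i => k i = 1), (v i).choose 2
        + ((∑ i, k i).choose 2 - 1)) / (∑ i, k i).choose 2
      ≤ GCNum v k 2 :=
  gc_edge_counting_bound_general v k hk hkv
end

section
/- Let D be a generalized covering design GC(v,k,2) with N blocks, and let I be a nonempty subset of the index set {1,…,m} with k restricted to I not equal to the single-entry vector (1). Then the componentwise restriction of the blocks of D to indices in I is a generalized covering design GC(v^I, k^I, 2); hence C(v,k,2) ≥ C(v^I,k^I,2). -/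
open Finset

/-
A tuple of sets `T` indexed by `I` extends by empty sets to a tuple indexed by all parts, with
the same componentwise sizes and the same total size; a block of `D` covering the extension
covers `T` after restriction. Since the covering number is the least size of a design, this
restriction also compares the covering numbers.
-/

section Restriction

variable {ι : Type*} [Fintype ι] {v k : ι → ℕ} {t : ℕ}

theorem IsGCD.restrict {R : Type*} {D : R → ∀ i, Finset (Fin (v i))} (hD : IsGCD v k t D)
    (I : Finset ι) :
    IsGCD (fun i : I => v i) (fun i : I => k i) t (fun r (i : I) => D r i) := by
  classical
  obtain ⟨hcard, hcover⟩ := hD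
  refine ⟨fun r i => hcard r i, fun T hTk hTsum => ?_⟩
  let T' : ∀ i, Finset (Fin (v i)) := fun i => if h : i ∈ I then T ⟨i, h⟩ else ∅
  have hT'k : ∀ i, (T' i).card ≤ k i := fun i => by
    by_cases h : i ∈ I
    · simpa [T', h] using hTk ⟨i, h⟩
    · simp [T', h]
  have hT'sum : ∑ i, (T' i).card = t := by
    calc ∑ i, (T' i).card = ∑ i ∈ I, (T' i).card :=
          (sum_subset (subset_univ I) fun i _ hi => by simp [T', hi]).symm
      _ = ∑ i : I, (T i).card := by
          rw [← sum_coe_sort]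
          exact sum_congr rfl fun i _ => by simp [T', i.2]
      _ = t := hTsum
  obtain ⟨r, hr⟩ := hcover T' hT'k hT'sum
  exact ⟨r, fun i => by simpa [T', i.2] using hr i⟩

theorem GCNum_le {N : ℕ} {D : Fin N → ∀ i, Finset (Fin (v i))} (hD : IsGCD v k t D) :
    GCNum v k t ≤ N :=
  Nat.sInf_le ⟨D, hD⟩

theorem exists_isGCD_card_GCNum {N : ℕ} {D : Fin N → ∀ i, Finset (Fin (v i))}
    (hD : IsGCD v k t D) :
    ∃ D' : Fin (GCNum v k t) → ∀ i, Finset (Fin (v i)), IsGCD v k t D' :=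
  Nat.sInf_mem (s := {n | ∃ D : Fin n → ∀ i, Finset (Fin (v i)), IsGCD v k t D})
    ⟨N, D, hD⟩

theorem GCNum_restrict_le {N : ℕ} {D : Fin N → ∀ i, Finset (Fin (v i))}
    (hD : IsGCD v k t D) (I : Finset ι) :
    GCNum (fun i : I => v i) (fun i : I => k i) t ≤ GCNum v k t := by
  obtain ⟨D', hD'⟩ := exists_isGCD_card_GCNum hD
  exact GCNum_le (hD'.restrict I)

end Restriction

theorem gc_restriction_general {m N : ℕ} (v k : Fin m → ℕ)
    (D : Fin N → ∀ i, Finset (Fin (v i))) (hD : IsGCD v k 2 D)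
    (I : Finset (Fin m)) :
    IsGCD (fun i : {j // j ∈ I} => v i.1) (fun i : {j // j ∈ I} => k i.1) 2
        (fun r (i : {j // j ∈ I}) => D r i.1)
      ∧ GCNum (fun i : {j // j ∈ I} => v i.1) (fun i : {j // j ∈ I} => k i.1) 2
        ≤ GCNum v k 2 :=
  ⟨hD.restrict I, GCNum_restrict_le hD I⟩

/-- Restriction: if `D` is a `GC(v,k,2)` with `N` blocks and `I` is a nonempty index set with
`k^I ≠ (1)`, then the componentwise restriction of the blocks of `D` to `I` is a
`GC(v^I,k^I,2)`; hence `C(v,k,2) ≥ C(v^I,k^I,2)`. -/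
theorem gc_restriction {m N : ℕ} (v k : Fin m → ℕ)
    (hk : ∀ i, 1 ≤ k i) (hkv : ∀ i, k i ≤ v i)
    (D : Fin N → ∀ i, Finset (Fin (v i))) (hD : IsGCD v k 2 D)
    (I : Finset (Fin m)) (hI : I.Nonempty)
    (hI1 : ¬ ∃ i : Fin m, I = {i} ∧ k i = 1) :
    IsGCD (fun i : {j // j ∈ I} => v i.1) (fun i : {j // j ∈ I} => k i.1) 2
        (fun r (i : {j // j ∈ I}) => D r i.1)
      ∧ GCNum (fun i : {j // j ∈ I} => v i.1) (fun i : {j // j ∈ I} => k i.1) 2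
        ≤ GCNum v k 2 :=
  gc_restriction_general v k D hD I
end

section
/- Let v,k be vectors with k ≤ v and let D be a GC(v,k,2) of size N. Form v* = (v_1,…,v_m,w) and k* = (k_1,…,k_m,ℓ) where (w,ℓ) = (v_i,k_i) for some fixed index i with k_i ≥ 2. Then there exists a GC(v*,k*,2) of size N. -/
/-! Identify the new part `Y` with `X_{i₀}` and fold an admissible `t`-set of the extended design
back into the original one: it becomes a family of total size at most `t` (less when a point of
`Y` lands on one of `X_{i₀}`) and of size at most `t ≤ k_{i₀}` in `X_{i₀}`. Since `k ≤ v`, such a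
family can be padded to an admissible family of total size exactly `t`, which some original
block covers; the extended block, whose `Y`-component copies its `X_{i₀}`-component, then covers
the unfolded set. -/

open Finset

theorem Fintype.sum_update_add {ι M : Type*} [Fintype ι] [DecidableEq ι] [AddCommMonoid M]
    (g : ι → M) (i : ι) (b : M) :
    ∑ j, Function.update g i b j + g i = ∑ j, g j + b := by
  rw [sum_update_of_mem (mem_univ i), ← add_sum_erase univ g (mem_univ i),
    sdiff_singleton_eq_erase]
  abel

section Extension

variable {ι : Type*} [Fintype ι] [DecidableEq ι] {v k : ι → ℕ}

theorem sum_card_update {α : ι → Type*} (T : ∀ i, Finset (α i)) (i : ι) (B : Finset (α i)) :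
    ∑ j, (Function.update T i B j).card + (T i).card = ∑ j, (T j).card + B.card := by
  simp_rw [Function.apply_update (fun j (s : Finset (α j)) => s.card)]
  exact Fintype.sum_update_add _ i _

theorem exists_extension_sum_card_eq (hkv : ∀ i, k i ≤ v i) {t : ℕ} (ht : t ≤ ∑ i, k i)
    (T : ∀ i, Finset (Fin (v i))) (hT : ∀ i, (T i).card ≤ k i) (hsum : ∑ i, (T i).card ≤ t) :
    ∃ U : ∀ i, Finset (Fin (v i)),
      (∀ i, T i ⊆ U i) ∧ (∀ i, (U i).card ≤ k i) ∧ ∑ i, (U i).card = t := by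
  obtain ⟨n, hn⟩ := Nat.exists_eq_add_of_le hsum
  induction n generalizing T with
  | zero => exact ⟨T, fun _ => subset_rfl, hT, hn.symm⟩
  | succ n ih =>
    obtain ⟨i, -, hi⟩ : ∃ i ∈ univ, (T i).card < k i :=
      exists_lt_of_sum_lt (by omega)
    obtain ⟨B, hTB, hB⟩ := exists_superset_card_eq (s := T i) (n := (T i).card + 1)
      (by omega) (by simpa using (hi.trans_le (hkv i)))
    have hsum' := sum_card_update T i B
    obtain ⟨U, hTU, hU, hUsum⟩ := ih (Function.update T i B)
      (fun j => by
        rcases eq_or_ne j i with rfl | hj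
        · simpa [hB] using hi
        · simpa [hj] using hT j)
      (by omega) (by omega)
    refine ⟨U, fun j => ?_, hU, hUsum⟩
    rcases eq_or_ne j i with rfl | hj
    · exact hTB.trans (by simpa using hTU j)
    · simpa [hj] using hTU j

theorem IsGCD.exists_cover_of_sum_card_le {R : Type*} {t : ℕ} {D : R → ∀ i, Finset (Fin (v i))}
    (hD : IsGCD v k t D) (hkv : ∀ i, k i ≤ v i) (ht : t ≤ ∑ i, k i)
    (T : ∀ i, Finset (Fin (v i))) (hT : ∀ i, (T i).card ≤ k i) (hsum : ∑ i, (T i).card ≤ t) :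
    ∃ r, ∀ i, T i ⊆ D r i := by
  obtain ⟨U, hTU, hU, hUsum⟩ := exists_extension_sum_card_eq hkv ht T hT hsum
  obtain ⟨r, hr⟩ := hD.2 U hU hUsum
  exact ⟨r, fun i => (hTU i).trans (hr i)⟩

end Extension

section PartCopy

variable {ι : Type*} [DecidableEq ι] {v k : ι → ℕ} (i₀ : ι)

def addPartCopy {R : Type*} (D : R → ∀ i, Finset (Fin (v i))) :
    R → ∀ j : ι ⊕ Unit, Finset (Fin (Sum.elim v (fun _ => v i₀) j)) :=
  fun r => Sum.rec (D r) (fun _ => D r i₀)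

def foldPartCopy (T : ∀ j : ι ⊕ Unit, Finset (Fin (Sum.elim v (fun _ => v i₀) j))) :
    ∀ i, Finset (Fin (v i)) :=
  Function.update (fun i => T (.inl i)) i₀ (T (.inl i₀) ∪ T (.inr ()))

variable {i₀} (T : ∀ j : ι ⊕ Unit, Finset (Fin (Sum.elim v (fun _ => v i₀) j)))

theorem foldPartCopy_self : foldPartCopy i₀ T i₀ = T (.inl i₀) ∪ T (.inr ()) :=
  Function.update_self _ _ _

theorem foldPartCopy_of_ne {i : ι} (hi : i ≠ i₀) : foldPartCopy i₀ T i = T (.inl i) :=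
  Function.update_of_ne hi _ _

theorem subset_foldPartCopy_inl (i : ι) : T (.inl i) ⊆ foldPartCopy i₀ T i := by
  rcases eq_or_ne i i₀ with rfl | hi
  · exact foldPartCopy_self T ▸ subset_union_left
  · exact (foldPartCopy_of_ne T hi).symm.subset

theorem subset_foldPartCopy_inr : T (.inr ()) ⊆ foldPartCopy i₀ T i₀ :=
  foldPartCopy_self T ▸ subset_union_right

theorem sum_card_foldPartCopy_le [Fintype ι] :
    ∑ i, (foldPartCopy i₀ T i).card ≤ ∑ j, (T j).card := by
  have hsplit : ∑ j, (T j).card = ∑ i, (T (.inl i)).card + (T (.inr ())).card := by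
    simp [Fintype.sum_sum_type]
  refine le_of_add_le_add_right (a := (T (.inl i₀)).card) ?_
  calc ∑ i, (foldPartCopy i₀ T i).card + (T (.inl i₀)).card
      = ∑ i, (T (.inl i)).card + (T (.inl i₀) ∪ T (.inr ())).card :=
        sum_card_update (fun i => T (.inl i)) i₀ _
    _ ≤ ∑ i, (T (.inl i)).card + ((T (.inl i₀)).card + (T (.inr ())).card) := by
        gcongr; exact card_union_le _ _
    _ = ∑ j, (T j).card + (T (.inl i₀)).card := by rw [hsplit]; ring

theorem card_foldPartCopy_le [Fintype ι] (hT : ∀ j, (T j).card ≤ Sum.elim k (fun _ => k i₀) j)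
    (hsum : ∑ j, (T j).card ≤ k i₀) (i : ι) : (foldPartCopy i₀ T i).card ≤ k i := by
  rcases eq_or_ne i i₀ with rfl | hi
  · calc (foldPartCopy i T i).card
        ≤ ∑ i', (foldPartCopy i T i').card :=
          single_le_sum (f := fun i' => (foldPartCopy i T i').card) (fun _ _ => Nat.zero_le _)
            (mem_univ i)
      _ ≤ ∑ j, (T j).card := sum_card_foldPartCopy_le T
      _ ≤ k i := hsum
  · exact foldPartCopy_of_ne T hi ▸ hT (.inl i)

end PartCopy

theorem IsGCD.addPartCopy {ι : Type*} [Fintype ι] [DecidableEq ι] {v k : ι → ℕ} {R : Type*}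
    {t : ℕ} {D : R → ∀ i, Finset (Fin (v i))} (hD : IsGCD v k t D) (hkv : ∀ i, k i ≤ v i)
    {i₀ : ι} (ht : t ≤ k i₀) :
    IsGCD (Sum.elim v (fun _ => v i₀)) (Sum.elim k (fun _ => k i₀)) t (addPartCopy i₀ D) := by
  refine ⟨fun r j => ?_, fun T hT hsum => ?_⟩
  · cases j <;> exact hD.1 r _
  obtain ⟨r, hr⟩ := hD.exists_cover_of_sum_card_le hkv
    (ht.trans (single_le_sum (fun _ _ => Nat.zero_le _) (mem_univ i₀))) (foldPartCopy i₀ T)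
    (card_foldPartCopy_le T hT (hsum.trans_le ht)) ((sum_card_foldPartCopy_le T).trans hsum.le)
  refine ⟨r, fun j => ?_⟩
  rcases j with i | ⟨⟩
  · exact (subset_foldPartCopy_inl T i).trans (hr i)
  · exact (subset_foldPartCopy_inr T).trans (hr i₀)

/-- Equivalence lemma: from a `GC(v,k,2)` of size `N` and an index `i₀` with `k i₀ ≥ 2`,
one obtains a `GC(v*,k*,2)` of size `N`, where `v* = (v_1,…,v_m,w)`, `k* = (k_1,…,k_m,ℓ)`
with `(w,ℓ) = (v i₀, k i₀)` (the new part is indexed by the `Sum.inr` summand). -/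
theorem gc_add_equivalent_part {m N : ℕ} (v k : Fin m → ℕ)
    (hkv : ∀ i, k i ≤ v i)
    (D : Fin N → ∀ i, Finset (Fin (v i))) (hD : IsGCD v k 2 D)
    (i₀ : Fin m) (hi₀ : 2 ≤ k i₀) :
    ∃ D' : Fin N → ∀ i : Fin m ⊕ Unit, Finset (Fin (Sum.elim v (fun _ => v i₀) i)),
      IsGCD (Sum.elim v (fun _ => v i₀)) (Sum.elim k (fun _ => k i₀)) 2 D' :=
  ⟨addPartCopy i₀ D, hD.addPartCopy hkv hi₀⟩
end

section
/- Suppose k_i ≥ 2 for all i, and let R be a set of representatives of the equivalence classes of indices under i ∼ j iff (v_i,k_i)=(v_j,k_j). Then C(v,k,2) = C(v^R, k^R, 2). -/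
open Finset

/-! Designs of strength 2 pull back along any map of index types `ρ : ι → κ`, block `D r`
becoming `i ↦ D r (ρ i)`: to cover a tuple `T` on `ι` of total size 2, take unions of its parts
over the fibres of `ρ`. The resulting tuple on `κ` has total size 1 or 2, and since `2 ≤ k ≤ v` it
can be enlarged to one of total size exactly 2, which some block covers. Pulling back along the
inclusion `R → Fin m` and along a choice of representatives `Fin m → R` turns a design for either
parameter vector into one for the other with the same number of blocks. -/

section Enlarge

variable {ι : Type*} [Fintype ι] {v k : ι → ℕ}

lemma exists_superset_card_sum_eq_succ (hkv : ∀ i, k i ≤ v i)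
    (S : ∀ i, Finset (Fin (v i))) (hS : ∀ i, #(S i) ≤ k i) (hlt : ∑ i, #(S i) < ∑ i, k i) :
    ∃ S' : ∀ i, Finset (Fin (v i)),
      (∀ i, S i ⊆ S' i) ∧ (∀ i, #(S' i) ≤ k i) ∧ ∑ i, #(S' i) = ∑ i, #(S i) + 1 := by
  classical
  obtain ⟨i, -, hi⟩ := exists_lt_of_sum_lt hlt
  obtain ⟨y, -, hy⟩ := exists_mem_notMem_of_card_lt_card (s := S i) (t := univ)
    (by simpa using hi.trans_le (hkv i))
  have hcard : ∀ j,
      #(Function.update S i (insert y (S i)) j) = #(S j) + if j = i then 1 else 0 := by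
    intro j
    by_cases hj : j = i
    · subst hj; simp [card_insert_of_notMem hy]
    · simp [hj]
  refine ⟨Function.update S i (insert y (S i)), fun j => ?_, fun j => ?_, ?_⟩
  · by_cases hj : j = i
    · subst hj; simp
    · simp [hj]
  · rw [hcard]; split_ifs with hj
    · subst hj; omega
    · simpa using hS j
  · simp only [hcard, sum_add_distrib, Fintype.sum_ite_eq']

lemma exists_superset_card_sum_eq (hkv : ∀ i, k i ≤ v i)
    (S : ∀ i, Finset (Fin (v i))) (hS : ∀ i, #(S i) ≤ k i) {t : ℕ}
    (hSt : ∑ i, #(S i) ≤ t) (htk : t ≤ ∑ i, k i) :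
    ∃ S' : ∀ i, Finset (Fin (v i)),
      (∀ i, S i ⊆ S' i) ∧ (∀ i, #(S' i) ≤ k i) ∧ ∑ i, #(S' i) = t := by
  induction t with
  | zero => exact ⟨S, fun _ => subset_rfl, hS, by omega⟩
  | succ t ih =>
    rcases hSt.eq_or_lt with hSt | hSt
    · exact ⟨S, fun _ => subset_rfl, hS, hSt⟩
    obtain ⟨S₁, hSS₁, hS₁, hS₁t⟩ := ih (by omega) (by omega)
    obtain ⟨S₂, hS₁S₂, hS₂, hS₂t⟩ := exists_superset_card_sum_eq_succ hkv S₁ hS₁ (by omega)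
    exact ⟨S₂, fun i => (hSS₁ i).trans (hS₁S₂ i), hS₂, by omega⟩

lemma IsGCD.exists_cover_of_sum_le {B : Type*} {t : ℕ} {D : B → ∀ i, Finset (Fin (v i))}
    (hD : IsGCD v k t D) (hkv : ∀ i, k i ≤ v i)
    (S : ∀ i, Finset (Fin (v i))) (hS : ∀ i, #(S i) ≤ k i)
    (hSt : ∑ i, #(S i) ≤ t) (htk : t ≤ ∑ i, k i) :
    ∃ r, ∀ i, S i ⊆ D r i := by
  obtain ⟨S', hSS', hS', hS't⟩ := exists_superset_card_sum_eq hkv S hS hSt htk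
  obtain ⟨r, hr⟩ := hD.2 S' hS' hS't
  exact ⟨r, fun i => (hSS' i).trans (hr i)⟩

end Enlarge

lemma exists_fiberwise_union {ι κ : Type*} [Fintype ι] [DecidableEq κ] (w : κ → ℕ) (ρ : ι → κ)
    (T : ∀ i, Finset (Fin (w (ρ i)))) :
    ∃ T' : ∀ j, Finset (Fin (w j)),
      (∀ i, T i ⊆ T' (ρ i)) ∧ ∀ j, #(T' j) ≤ ∑ i with ρ i = j, #(T i) := by
  let U : ∀ j, ι → Finset (Fin (w j)) := fun j i => if h : ρ i = j then h ▸ T i else ∅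
  refine ⟨fun j => univ.biUnion (U j), fun i => ?_, fun j => ?_⟩
  · have hU : U (ρ i) i = T i := dif_pos rfl
    exact hU ▸ subset_biUnion_of_mem (U (ρ i)) (mem_univ i)
  · rw [sum_filter]
    refine card_biUnion_le.trans (sum_le_sum fun i _ => ?_)
    by_cases h : ρ i = j
    · subst h; simp [U]
    · simp [U, h]

lemma IsGCD.comp {ι κ B : Type*} [Fintype ι] [Fintype κ] {w l : κ → ℕ}
    {D : B → ∀ j, Finset (Fin (w j))} (hD : IsGCD w l 2 D)
    (hl : ∀ j, 2 ≤ l j) (hlw : ∀ j, l j ≤ w j) (ρ : ι → κ) :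
    IsGCD (fun i => w (ρ i)) (fun i => l (ρ i)) 2 (fun r i => D r (ρ i)) := by
  classical
  refine ⟨fun r i => hD.1 r (ρ i), fun T _ hT => ?_⟩
  obtain ⟨T', hTT', hT'⟩ := exists_fiberwise_union w ρ T
  have hsum : ∑ j, #(T' j) ≤ 2 := by
    calc ∑ j, #(T' j) ≤ ∑ j, ∑ i with ρ i = j, #(T i) := sum_le_sum fun j _ => hT' j
      _ = 2 := (sum_fiberwise univ ρ _).trans hT
  have hT'l : ∀ j, #(T' j) ≤ l j := fun j =>
    ((single_le_sum (fun j _ => Nat.zero_le _) (mem_univ j)).trans hsum).trans (hl j)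
  obtain ⟨i₀⟩ : Nonempty ι := by
    by_contra h
    simp [not_nonempty_iff.1 h] at hT
  have hl_sum : 2 ≤ ∑ j, l j :=
    (hl (ρ i₀)).trans (single_le_sum (fun j _ => Nat.zero_le _) (mem_univ _))
  obtain ⟨r, hr⟩ := hD.exists_cover_of_sum_le hlw T' hT'l hsum hl_sum
  exact ⟨r, fun i => (hTT' i).trans (hr (ρ i))⟩

lemma exists_isGCD_congr {ι B : Type*} [Fintype ι] {v v' k k' : ι → ℕ} {t : ℕ}
    (hv : ∀ i, v i = v' i) (hk : ∀ i, k i = k' i) :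
    (∃ D : B → ∀ i, Finset (Fin (v i)), IsGCD v k t D) →
      ∃ D : B → ∀ i, Finset (Fin (v' i)), IsGCD v' k' t D := by
  obtain rfl := funext hv
  obtain rfl := funext hk
  exact id

theorem gc_equivalence_classes_general {m : ℕ} (v k : Fin m → ℕ)
    (hk : ∀ i, 2 ≤ k i) (hkv : ∀ i, k i ≤ v i)
    (R : Finset (Fin m))
    (hrep : ∀ i : Fin m, ∃ j ∈ R, v j = v i ∧ k j = k i) :
    GCNum v k 2
      = GCNum (fun i : {j // j ∈ R} => v i.1) (fun i : {j // j ∈ R} => k i.1) 2 := by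
  choose rep hrep_mem hv_rep hk_rep using hrep
  refine congrArg sInf (Set.ext fun N => ⟨?_, ?_⟩)
  · rintro ⟨D, hD⟩
    exact ⟨_, hD.comp hk hkv Subtype.val⟩
  · rintro ⟨D, hD⟩
    exact exists_isGCD_congr hv_rep hk_rep
      ⟨_, hD.comp (fun j => hk j) (fun j => hkv j) fun i => ⟨rep i, hrep_mem i⟩⟩

/-- If all `k_i ≥ 2` and `R` is a set of representatives of the equivalence classes of
indices under `i ∼ j ↔ (v_i,k_i) = (v_j,k_j)`, then `C(v,k,2) = C(v^R,k^R,2)`. -/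
theorem gc_equivalence_classes {m : ℕ} (v k : Fin m → ℕ)
    (hk : ∀ i, 2 ≤ k i) (hkv : ∀ i, k i ≤ v i)
    (R : Finset (Fin m))
    (hrep : ∀ i : Fin m, ∃ j ∈ R, v j = v i ∧ k j = k i)
    (huniq : ∀ j₁ ∈ R, ∀ j₂ ∈ R, v j₁ = v j₂ → k j₁ = k j₂ → j₁ = j₂) :
    GCNum v k 2
      = GCNum (fun i : {j // j ∈ R} => v i.1) (fun i : {j // j ∈ R} => k i.1) 2 :=
  gc_equivalence_classes_general v k hk hkv R hrep
end

section
/- Suppose k_i ≥ 2 for all i, and let v_max = max_i v_i and k_min = min_i k_i. Then C(v,k,2) ≤ C(v_max, k_min, 2), where the right side is the ordinary covering number. -/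
open Finset

/-!
Embed every `Fin (v i)` into `Fin v_max` by `Fin.castLE` and take an optimal ordinary covering of
`Fin v_max` by `k_min`-sets. Restricting a block to `Fin (v i)` leaves at most `k_min ≤ k i`
points, which we pad to exactly `k i`. A pair of points, inside one part or across two parts,
becomes a set of at most two points of `Fin v_max`; padded to a pair, it lies in some block, and
then each of its restrictions lies in the corresponding component of the new block.
-/

lemma exists_superset_card_eq {n k : ℕ} {s : Finset (Fin n)} (hs : #s ≤ k) (hk : k ≤ n) :
    ∃ Q : Finset (Fin n), s ⊆ Q ∧ #Q = k := by
  obtain ⟨Q, hsQ, -, hQ⟩ := exists_subsuperset_card_eq (subset_univ s) hs (by simpa using hk)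
  exact ⟨Q, hsQ, hQ⟩

lemma exists_isCover_s14 {V K t : ℕ} (htK : t ≤ K) (hKV : K ≤ V) :
    ∃ N, ∃ D : Fin N → Finset (Fin V), IsCover V K t D := by
  let P := (univ : Finset (Fin V)).powersetCard K
  refine ⟨#P, fun r => (P.equivFin.symm r : Finset (Fin V)),
    fun r => (mem_powersetCard.mp (P.equivFin.symm r).2).2, fun T hT => ?_⟩
  obtain ⟨B, hTB, hB⟩ := exists_superset_card_eq (hT ▸ htK) hKV
  exact ⟨P.equivFin ⟨B, mem_powersetCard.mpr ⟨subset_univ B, hB⟩⟩, by simpa using hTB⟩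

lemma exists_isCover_coverNum {V K t : ℕ} (htK : t ≤ K) (hKV : K ≤ V) :
    ∃ D : Fin (coverNum V K t) → Finset (Fin V), IsCover V K t D :=
  Nat.sInf_mem (exists_isCover_s14 htK hKV)

lemma gcNum_le_of_isGCD {ι : Type*} [Fintype ι] {v k : ι → ℕ} {t N : ℕ}
    {D : Fin N → ∀ i, Finset (Fin (v i))} (hD : IsGCD v k t D) : GCNum v k t ≤ N :=
  Nat.sInf_le ⟨D, hD⟩

lemma card_preimage_castLE_le {n V : ℕ} (h : n ≤ V) (B : Finset (Fin V)) :
    #(B.preimage (Fin.castLEEmb h) (Fin.castLEEmb h).injective.injOn) ≤ #B := by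
  rw [← card_map (Fin.castLEEmb h)]
  exact card_le_card (map_subset_iff_subset_preimage.mpr subset_rfl)

theorem IsCover.exists_isGCD {ι : Type*} [Fintype ι] {v k : ι → ℕ} {V K t N : ℕ}
    {D : Fin N → Finset (Fin V)} (hD : IsCover V K t D) (hv : ∀ i, v i ≤ V)
    (hK : ∀ i, K ≤ k i) (hkv : ∀ i, k i ≤ v i) (htV : t ≤ V) :
    ∃ D' : Fin N → ∀ i, Finset (Fin (v i)), IsGCD v k t D' := by
  classical
  let e i : Fin (v i) ↪ Fin V := Fin.castLEEmb (hv i)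
  have hpad (r : Fin N) (i : ι) : ∃ Q : Finset (Fin (v i)),
      (D r).preimage (e i) (e i).injective.injOn ⊆ Q ∧ #Q = k i :=
    exists_superset_card_eq
      ((card_preimage_castLE_le (hv i) (D r)).trans ((hD.1 r).trans_le (hK i))) (hkv i)
  choose D' hD'sup hD'card using hpad
  refine ⟨D', hD'card, fun T _ hTt => ?_⟩
  let S := univ.biUnion fun i => (T i).map (e i)
  have hS : #S ≤ t := calc
    #S ≤ ∑ i, #((T i).map (e i)) := card_biUnion_le
    _ = t := by simp only [card_map, hTt]
  obtain ⟨S', hSS', hS'⟩ := exists_superset_card_eq hS htV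
  obtain ⟨r, hr⟩ := hD.2 S' hS'
  refine ⟨r, fun i => ?_⟩
  have hTS : (T i).map (e i) ⊆ D r :=
    (subset_biUnion_of_mem (fun i => (T i).map (e i)) (mem_univ i)).trans (hSS'.trans hr)
  exact (map_subset_iff_subset_preimage.mp hTS).trans (hD'sup r i)

theorem gcNum_le_coverNum {ι : Type*} [Fintype ι] {v k : ι → ℕ} {V K t : ℕ}
    (hv : ∀ i, v i ≤ V) (hK : ∀ i, K ≤ k i) (hkv : ∀ i, k i ≤ v i) (htK : t ≤ K)
    (hKV : K ≤ V) : GCNum v k t ≤ coverNum V K t := by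
  obtain ⟨D, hD⟩ := exists_isCover_coverNum htK hKV
  obtain ⟨D', hD'⟩ := hD.exists_isGCD hv hK hkv (htK.trans hKV)
  exact gcNum_le_of_isGCD hD'

/-- If all `k_i ≥ 2`, then `C(v,k,2) ≤ C(v_max, k_min, 2)`. -/
theorem gc_le_maxmin {m : ℕ} (hm : 0 < m) (v k : Fin m → ℕ)
    (hk : ∀ i, 2 ≤ k i) (hkv : ∀ i, k i ≤ v i) :
    GCNum v k 2
      ≤ coverNum (Finset.univ.sup v)
          (Finset.univ.inf' (Finset.univ_nonempty_iff.mpr ⟨⟨0, hm⟩⟩) k) 2 := by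
  have hv (i : Fin m) : v i ≤ univ.sup v := le_sup (mem_univ i)
  have hK (i : Fin m) : univ.inf' (univ_nonempty_iff.mpr ⟨⟨0, hm⟩⟩) k ≤ k i :=
    inf'_le k (mem_univ i)
  refine gcNum_le_coverNum hv hK hkv (le_inf' _ _ fun i _ => hk i) ?_
  exact (hK ⟨0, hm⟩).trans ((hkv _).trans (hv _))
end

section
/- Let D be a GC(v,k,2) with m ≥ 2 parts where k_1 ≥ 2 and k_2 ≥ 2. Replacing each block (B_1,B_2,B_3,…,B_m) by (B_1 ∪ B_2, B_3,…,B_m) yields a GC(v⁺,k⁺,2) where v⁺=(v_1+v_2,v_3,…,v_m) and k⁺=(k_1+k_2,k_3,…,k_m); hence C(v⁺,k⁺,2) ≤ C(v,k,2). -/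
/-!
Read the merged part `Fin (v₁ + v₂)` as `Fin v₁ ⊕ Fin v₂`; then an amalgamated block is the old
block with its first two components glued. A tuple `T` to be covered in the amalgamated design
has at most `t` points in the merged part, so its traces on the two original parts have sizes at
most `t ≤ k₁, k₂`, and with the other components they form a tuple of the same total size that
some old block covers. The number of blocks is unchanged, so the covering number can only drop.
-/

open Finset

/-- The part sizes after amalgamating the two `Bool`-indexed parts into one `Unit`-indexed part. -/
def amalgSizes {ι : Type*} (v : Bool ⊕ ι → ℕ) : Unit ⊕ ι → ℕ :=
  Sum.elim (fun _ => v (.inl true) + v (.inl false)) (fun j => v (.inr j))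

/-- Amalgamation of a block: the two `Bool`-indexed components are replaced by their
(disjoint) union inside `Fin (v(inl true) + v(inl false))`; all other components unchanged. -/
def amalgBlock {ι : Type*} [DecidableEq ι] (v : Bool ⊕ ι → ℕ)
    (B : ∀ i, Finset (Fin (v i))) :
    ∀ i : Unit ⊕ ι, Finset (Fin (amalgSizes v i))
  | .inl _ => (B (.inl true)).map (Fin.castAddEmb (v (.inl false)))
      ∪ (B (.inl false)).map (Fin.natAddEmb (v (.inl true)))
  | .inr j => B (.inr j)

lemma subset_map_finSumFinEquiv_disjSum {m n : ℕ} {S : Finset (Fin (m + n))} {A : Finset (Fin m)}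
    {B : Finset (Fin n)} :
    S ⊆ (A.disjSum B).map finSumFinEquiv.toEmbedding ↔
      (S.map finSumFinEquiv.symm.toEmbedding).toLeft ⊆ A ∧
        (S.map finSumFinEquiv.symm.toEmbedding).toRight ⊆ B := by
  rw [← subset_disjSum, ← map_subset_map (f := finSumFinEquiv.symm.toEmbedding), map_map,
    Function.Embedding.equiv_toEmbedding_trans_symm_toEmbedding, map_refl]

section Amalgamation

variable {ι : Type*} (v : Bool ⊕ ι → ℕ)

def amalgSplit (T : ∀ i : Unit ⊕ ι, Finset (Fin (amalgSizes v i))) :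
    ∀ i : Bool ⊕ ι, Finset (Fin (v i))
  | .inl true => ((T (.inl ())).map finSumFinEquiv.symm.toEmbedding).toLeft
  | .inl false => ((T (.inl ())).map finSumFinEquiv.symm.toEmbedding).toRight
  | .inr j => T (.inr j)

lemma card_amalgSplit_inl_le (T : ∀ i : Unit ⊕ ι, Finset (Fin (amalgSizes v i))) (b : Bool) :
    #(amalgSplit v T (.inl b)) ≤ #(T (.inl ())) := by
  cases b
  · exact card_toRight_le.trans (card_map _).le
  · exact card_toLeft_le.trans (card_map _).le

lemma sum_card_amalgSplit [Fintype ι] (T : ∀ i : Unit ⊕ ι, Finset (Fin (amalgSizes v i))) :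
    ∑ i, #(amalgSplit v T i) = ∑ i, #(T i) := by
  have hsplit : #(amalgSplit v T (.inl true)) + #(amalgSplit v T (.inl false)) = #(T (.inl ())) :=
    card_toLeft_add_card_toRight.trans (card_map _)
  simp only [Fintype.sum_sum_type, Fintype.sum_bool, Fintype.sum_unique]
  rw [hsplit]
  rfl

variable [DecidableEq ι]

lemma amalgBlock_inl (B : ∀ i, Finset (Fin (v i))) (u : Unit) :
    amalgBlock v B (.inl u) =
      ((B (.inl true)).disjSum (B (.inl false))).map finSumFinEquiv.toEmbedding := by
  rw [map_disjSum, disjUnion_eq_union]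
  rfl

lemma card_amalgBlock {k : Bool ⊕ ι → ℕ} {B : ∀ i, Finset (Fin (v i))} (hB : ∀ i, #(B i) = k i) :
    ∀ i, #(amalgBlock v B i) = amalgSizes k i
  | .inl u => by
    rw [amalgBlock_inl]
    exact (card_map _).trans ((card_disjSum _ _).trans (congrArg₂ _ (hB _) (hB _)))
  | .inr j => hB (.inr j)

lemma subset_amalgBlock_of_amalgSplit_subset {T : ∀ i : Unit ⊕ ι, Finset (Fin (amalgSizes v i))}
    {B : ∀ i, Finset (Fin (v i))} (h : ∀ i, amalgSplit v T i ⊆ B i) :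
    ∀ i, T i ⊆ amalgBlock v B i
  | .inl u => by
    rw [amalgBlock_inl]
    exact subset_map_finSumFinEquiv_disjSum.2 ⟨h (.inl true), h (.inl false)⟩
  | .inr j => h (.inr j)

lemma IsGCD.amalg [Fintype ι] {k : Bool ⊕ ι → ℕ} {t : ℕ} (hk : ∀ b, t ≤ k (.inl b)) {R : Type*}
    {D : R → ∀ i, Finset (Fin (v i))} (hD : IsGCD v k t D) :
    IsGCD (amalgSizes v) (amalgSizes k) t (fun r => amalgBlock v (D r)) := by
  refine ⟨fun r => card_amalgBlock v (hD.1 r), fun T hTk hTsum => ?_⟩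
  have hT_inl : #(T (.inl ())) ≤ t :=
    hTsum ▸ single_le_sum (f := fun i => #(T i)) (fun _ _ => Nat.zero_le _) (mem_univ _)
  have hsplit_le : ∀ i, #(amalgSplit v T i) ≤ k i
    | .inl b => (card_amalgSplit_inl_le v T b).trans (hT_inl.trans (hk b))
    | .inr j => hTk (.inr j)
  obtain ⟨r, hr⟩ := hD.2 _ hsplit_le ((sum_card_amalgSplit v T).trans hTsum)
  exact ⟨r, subset_amalgBlock_of_amalgSplit_subset v hr⟩

end Amalgamation

lemma GCNum_le_of_forall_isGCD {ι κ : Type*} [Fintype ι] [Fintype κ] {v k : ι → ℕ}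
    {v' k' : κ → ℕ} {t t' : ℕ} (hne : ∃ N, ∃ D : Fin N → ∀ i, Finset (Fin (v i)), IsGCD v k t D)
    (h : ∀ N (D : Fin N → ∀ i, Finset (Fin (v i))), IsGCD v k t D →
      ∃ D' : Fin N → ∀ i, Finset (Fin (v' i)), IsGCD v' k' t' D') :
    GCNum v' k' t' ≤ GCNum v k t := by
  obtain ⟨D, hD⟩ := Nat.sInf_mem hne
  exact Nat.sInf_le (h _ D hD)

theorem gc_amalgamation_general {ι : Type*} [Fintype ι] [DecidableEq ι] {N : ℕ}
    (v k : Bool ⊕ ι → ℕ) (hk2 : ∀ b : Bool, 2 ≤ k (.inl b))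
    (D : Fin N → ∀ i, Finset (Fin (v i))) (hD : IsGCD v k 2 D) :
    IsGCD (amalgSizes v) (amalgSizes k) 2 (fun r => amalgBlock v (D r))
      ∧ GCNum (amalgSizes v) (amalgSizes k) 2 ≤ GCNum v k 2 :=
  ⟨hD.amalg v hk2,
    GCNum_le_of_forall_isGCD ⟨N, D, hD⟩ fun _ _ hD' => ⟨_, hD'.amalg v hk2⟩⟩

/-- Amalgamation: replacing each block `(B₁,B₂,B₃,…)` of a `GC(v,k,2)` (with `k₁,k₂ ≥ 2`)
by `(B₁ ∪ B₂,B₃,…)` yields a `GC(v⁺,k⁺,2)` where `v⁺ = (v₁+v₂,v₃,…)`, `k⁺ = (k₁+k₂,k₃,…)`;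
hence `C(v⁺,k⁺,2) ≤ C(v,k,2)`.  The two amalgamated parts are indexed by `Bool`,
the remaining parts by `ι`. -/
theorem gc_amalgamation {ι : Type*} [Fintype ι] [DecidableEq ι] {N : ℕ}
    (v k : Bool ⊕ ι → ℕ) (hkv : ∀ i, k i ≤ v i) (hk2 : ∀ b : Bool, 2 ≤ k (.inl b))
    (D : Fin N → ∀ i, Finset (Fin (v i))) (hD : IsGCD v k 2 D) :
    IsGCD (amalgSizes v) (amalgSizes k) 2 (fun r => amalgBlock v (D r))
      ∧ GCNum (amalgSizes v) (amalgSizes k) 2 ≤ GCNum v k 2 :=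
  gc_amalgamation_general v k hk2 D hD
end
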